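/- arXiv:2501.11863 — 3 statements merged into one kernel-verified Lean document; each statement's English description precedes it below -/
import Mathlib

section
/- Fix β̃ > 0, α > 1, and γ with β̃ < γ < β̃(1 + (α − 1)²/(4α)), and let f(x) = (β̃ − γ)x + β̃(α − 1)x² − αβ̃x³. Then f has exactly two fixed points in the open interval (0, 1), namely x± = ((α − 1) ± √((α − 1)² − 4α(γ/β̃ − 1)))/(2α), and moreover f′(0) = β̃ − γ < 0, f′(x₊) < 0, and f′(x₋) > 0; i.e., the system is bistable, with the no-opinion state and the upper branch both stable and the middle branch unstable. -/
/-!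
Whenever `s² = (α - 1)² - 4α(γ/β̃ - 1)`, the cubic factors as
`f x = -αβ̃ · x · (x - x₊) · (x - x₋)` with `x± = ((α - 1) ± s) / (2α)`. The window on `γ` says
exactly that this discriminant lies in `(0, (α - 1)²)`, so `0 < s < α - 1` and hence
`0 < x₋ < x₊ < 1`. At the simple roots the factorisation gives `f'(x±) = ∓β̃ s x±`, while
`f'(0) = β̃ - γ < 0`.
-/

open Real Set

namespace MeanField

def field (b α γ x : ℝ) : ℝ := (b - γ) * x + b * (α - 1) * x ^ 2 - α * b * x ^ 3

noncomputable def discr (b α γ : ℝ) : ℝ := (α - 1) ^ 2 - 4 * α * (γ / b - 1)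

noncomputable def upperRoot (α s : ℝ) : ℝ := ((α - 1) + s) / (2 * α)

noncomputable def lowerRoot (α s : ℝ) : ℝ := ((α - 1) - s) / (2 * α)

variable {b α γ s : ℝ}

theorem mul_discr (hb : b ≠ 0) : b * discr b α γ = b * (α - 1) ^ 2 - 4 * α * (γ - b) := by
  unfold discr
  field_simp

theorem discr_pos (hb : 0 < b) (hα : 0 < α) (hγ : γ < b * (1 + (α - 1) ^ 2 / (4 * α))) :
    0 < discr b α γ := by
  rw [discr, sub_pos, ← lt_div_iff₀' (by positivity), sub_lt_iff_lt_add', div_lt_iff₀' hb]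
  exact hγ

theorem discr_lt_sq (hb : 0 < b) (hα : 0 < α) (hγ : b < γ) : discr b α γ < (α - 1) ^ 2 :=
  sub_lt_self _ (mul_pos (by positivity) (sub_pos.2 ((one_lt_div hb).2 hγ)))

theorem lowerRoot_pos (hs₀ : 0 ≤ s) (hs : s < α - 1) : 0 < lowerRoot α s :=
  div_pos (by linarith) (by linarith)

theorem lowerRoot_lt_upperRoot (hα : 0 < α) (hs : 0 < s) : lowerRoot α s < upperRoot α s :=
  div_lt_div_of_pos_right (by linarith) (by linarith)

theorem upperRoot_lt_one (hα : 0 < α) (hs : s < α + 1) : upperRoot α s < 1 :=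
  (div_lt_one (by linarith)).2 (by linarith)

theorem field_eq_mul_sub_mul_sub (hb : b ≠ 0) (hα : α ≠ 0) (hs : s ^ 2 = discr b α γ) (x : ℝ) :
    field b α γ x = -(α * b) * x * (x - upperRoot α s) * (x - lowerRoot α s) := by
  have h := hs ▸ mul_discr (α := α) (γ := γ) hb
  unfold field upperRoot lowerRoot
  field_simp
  linear_combination -x * h

theorem field_eq_zero_iff (hb : b ≠ 0) (hα : α ≠ 0) (hs : s ^ 2 = discr b α γ) {x : ℝ} :
    field b α γ x = 0 ↔ x = 0 ∨ x = upperRoot α s ∨ x = lowerRoot α s := by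
  simp [field_eq_mul_sub_mul_sub hb hα hs, hα, hb, sub_eq_zero, or_assoc]

theorem setOf_mem_Ioo_field_eq_zero (hb : b ≠ 0) (hα : α ≠ 0) (hs : s ^ 2 = discr b α γ)
    (hm : 0 < lowerRoot α s) (hmp : lowerRoot α s < upperRoot α s) (hp : upperRoot α s < 1) :
    {x | x ∈ Ioo 0 1 ∧ field b α γ x = 0} = {upperRoot α s, lowerRoot α s} := by
  ext x
  simp only [mem_ofPred_eq, mem_insert_iff, mem_singleton_iff, field_eq_zero_iff hb hα hs]
  constructor
  · rintro ⟨hx, rfl | hroot⟩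
    · exact absurd hx.1 (lt_irrefl 0)
    · exact hroot
  · rintro (rfl | rfl)
    · exact ⟨⟨hm.trans hmp, hp⟩, Or.inr (Or.inl rfl)⟩
    · exact ⟨⟨hm, hmp.trans hp⟩, Or.inr (Or.inr rfl)⟩

theorem hasDerivAt_field (x : ℝ) :
    HasDerivAt (field b α γ) ((b - γ) + 2 * b * (α - 1) * x - 3 * α * b * x ^ 2) x :=
  ((((hasDerivAt_id' x).const_mul (b - γ)).fun_add
    ((hasDerivAt_pow 2 x).const_mul (b * (α - 1)))).fun_sub
    ((hasDerivAt_pow 3 x).const_mul (α * b))).congr_deriv (by ring)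

theorem deriv_field_zero : deriv (field b α γ) 0 = b - γ := by
  simp [(hasDerivAt_field 0).deriv]

theorem deriv_field_upperRoot (hb : b ≠ 0) (hα : α ≠ 0) (hs : s ^ 2 = discr b α γ) :
    deriv (field b α γ) (upperRoot α s) = -(b * s * upperRoot α s) := by
  have h := hs ▸ mul_discr (α := α) (γ := γ) hb
  rw [(hasDerivAt_field _).deriv, upperRoot]
  field_simp
  linear_combination -h

theorem deriv_field_lowerRoot (hb : b ≠ 0) (hα : α ≠ 0) (hs : s ^ 2 = discr b α γ) :
    deriv (field b α γ) (lowerRoot α s) = b * s * lowerRoot α s := by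
  have h := hs ▸ mul_discr (α := α) (γ := γ) hb
  rw [(hasDerivAt_field _).deriv, lowerRoot]
  field_simp
  linear_combination -h

end MeanField

/-- Bistability for α > 1 in the window β̃ < γ < β̃(1 + (α-1)²/(4α)): the mean-field
vector field f(x) = (β̃-γ)x + β̃(α-1)x² - αβ̃x³ has exactly two fixed points
x± = ((α-1) ± √((α-1)² - 4α(γ/β̃-1)))/(2α) in (0,1); moreover f'(0) = β̃-γ < 0,
f'(x₊) < 0 and f'(x₋) > 0: the no-opinion state and upper branch are stable, the
middle branch unstable. -/
theorem bistability_subcritical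
    (b α γ : ℝ) (hb : 0 < b) (hα : 1 < α)
    (hγ1 : b < γ) (hγ2 : γ < b * (1 + (α - 1) ^ 2 / (4 * α))) :
    {x : ℝ | x ∈ Set.Ioo (0 : ℝ) 1 ∧
        (b - γ) * x + b * (α - 1) * x ^ 2 - α * b * x ^ 3 = 0}
      = ({((α - 1) + Real.sqrt ((α - 1) ^ 2 - 4 * α * (γ / b - 1))) / (2 * α),
          ((α - 1) - Real.sqrt ((α - 1) ^ 2 - 4 * α * (γ / b - 1))) / (2 * α)} : Set ℝ) ∧
    ((α - 1) + Real.sqrt ((α - 1) ^ 2 - 4 * α * (γ / b - 1))) / (2 * α)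
      ≠ ((α - 1) - Real.sqrt ((α - 1) ^ 2 - 4 * α * (γ / b - 1))) / (2 * α) ∧
    deriv (fun x : ℝ => (b - γ) * x + b * (α - 1) * x ^ 2 - α * b * x ^ 3) 0 = b - γ ∧
    b - γ < 0 ∧
    deriv (fun x : ℝ => (b - γ) * x + b * (α - 1) * x ^ 2 - α * b * x ^ 3)
      (((α - 1) + Real.sqrt ((α - 1) ^ 2 - 4 * α * (γ / b - 1))) / (2 * α)) < 0 ∧
    0 < deriv (fun x : ℝ => (b - γ) * x + b * (α - 1) * x ^ 2 - α * b * x ^ 3)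
      (((α - 1) - Real.sqrt ((α - 1) ^ 2 - 4 * α * (γ / b - 1))) / (2 * α)) := by
  open MeanField in
  have hα₀ : 0 < α := by linarith
  have hD : 0 < discr b α γ := discr_pos hb hα₀ hγ2
  set s := √(discr b α γ)
  have hs : s ^ 2 = discr b α γ := sq_sqrt hD.le
  have hs₀ : 0 < s := sqrt_pos.2 hD
  have hsα : s < α - 1 := (sqrt_lt' (by linarith)).2 (discr_lt_sq hb hα₀ hγ1)
  have hm : 0 < lowerRoot α s := lowerRoot_pos hs₀.le hsα
  have hmp : lowerRoot α s < upperRoot α s := lowerRoot_lt_upperRoot hα₀ hs₀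
  have hp : upperRoot α s < 1 := upperRoot_lt_one hα₀ (by linarith)
  exact ⟨setOf_mem_Ioo_field_eq_zero hb.ne' hα₀.ne' hs hm hmp hp, hmp.ne', deriv_field_zero,
    sub_neg.2 hγ1,
    (deriv_field_upperRoot hb.ne' hα₀.ne' hs).trans_lt
      (neg_neg_of_pos (mul_pos (mul_pos hb hs₀) (hm.trans hmp))),
    (mul_pos (mul_pos hb hs₀) hm).trans_eq (deriv_field_lowerRoot hb.ne' hα₀.ne' hs).symm⟩
end

section
/- Fix β̃ > 0, α > 1, and set γ = β̃ (the critical point). Then f(x) = (β̃ − γ)x + β̃(α − 1)x² − αβ̃x³ = β̃x²((α − 1) − αx), and the set of nonnegative fixed points of f is exactly {0, (α − 1)/α}; in particular there is a fixed point at strictly positive height (α − 1)/α at criticality, so the branch of stable equilibria is discontinuous at the transition (explosive polarization of jump size (α − 1)/α). -/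
/-- At the critical point γ = β̃ with α > 1, the mean-field vector field factors as
f(x) = β̃x²((α-1) - αx), and its nonnegative fixed points are exactly {0, (α-1)/α};
the strictly positive fixed point (α-1)/α at criticality is the jump size of the
explosive (discontinuous) polarization transition. -/
theorem explosive_jump_at_criticality
    (b α γ : ℝ) (hb : 0 < b) (hα : 1 < α) (hγ : γ = b) :
    (∀ x : ℝ, (b - γ) * x + b * (α - 1) * x ^ 2 - α * b * x ^ 3
        = b * x ^ 2 * ((α - 1) - α * x)) ∧
    {x : ℝ | 0 ≤ x ∧ (b - γ) * x + b * (α - 1) * x ^ 2 - α * b * x ^ 3 = 0}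
      = ({0, (α - 1) / α} : Set ℝ) ∧
    0 < (α - 1) / α := by
  have hα0 : 0 < α := lt_trans one_pos hα
  refine ⟨fun x => by subst hγ; ring, ?_, div_pos (by linarith) hα0⟩
  ext x
  simp only [Set.mem_setOf_eq, Set.mem_insert_iff, Set.mem_singleton_iff]
  constructor
  · rintro ⟨hx, heq⟩
    have h : b * x ^ 2 * ((α - 1) - α * x) = 0 := by subst hγ; linarith [heq]; 
    rcases mul_eq_zero.mp h with h1 | h2
    · rcases mul_eq_zero.mp h1 with h3 | h4
      · exact absurd h3 (ne_of_gt hb)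
      · left; exact pow_eq_zero_iff (n := 2) (by norm_num) |>.mp h4
    · right
      field_simp
      linarith
  · rintro (rfl | rfl)
    · exact ⟨le_refl 0, by ring⟩
    · constructor
      · exact div_nonneg (by linarith) hα0.le
      · subst hγ; field_simp; ring
end

section
/- Fix β̃ > 0, α > 0, γ ∈ ℝ, and a real exponent d with 0 < d < 1, and define g(x) = (β̃ − γ)x − β̃x² + αβ̃(1 − x)x^d for x ≥ 0. Then there exists ε > 0 such that g(x) > 0 for all x ∈ (0, ε); in particular the no-opinion fixed point x = 0 is unstable for every value of γ when the new opinion is overestimated (0 < d < 1). -/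
/-- Overestimated perception 0 < d < 1: for g(x) = (β̃-γ)x - β̃x² + αβ̃(1-x)x^d there
is ε > 0 with g(x) > 0 on (0, ε); the no-opinion fixed point is unstable for every
revision rate γ. -/
theorem overestimation_destabilizes_origin
    (b α γ d : ℝ) (hb : 0 < b) (hα : 0 < α) (hd0 : 0 < d) (hd1 : d < 1) :
    ∃ ε > 0, ∀ x : ℝ, 0 < x → x < ε →
      0 < (b - γ) * x - b * x ^ 2 + α * b * (1 - x) * x ^ d := by
  set M : ℝ := |b - γ| + b with hM
  have hMpos : 0 < M := by positivity
  set c : ℝ := (α * b / 2) / M with hc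
  have hcpos : 0 < c := by positivity
  have h1d : 0 < 1 - d := by linarith
  refine ⟨min (1/2) (c ^ ((1-d)⁻¹)), lt_min (by norm_num) (Real.rpow_pos_of_pos hcpos _), ?_⟩
  intro x hx hxε
  clear_value M c
  have hx2 : x < 1/2 := lt_of_lt_of_le hxε (min_le_left _ _)
  have hxc : x < c ^ ((1-d)⁻¹) := lt_of_lt_of_le hxε (min_le_right _ _)
  -- x^(1-d) < c
  have hkey : x ^ (1-d) < c := by
    have := Real.rpow_lt_rpow hx.le hxc h1d
    rwa [← Real.rpow_mul hcpos.le, inv_mul_cancel₀ h1d.ne', Real.rpow_one] at this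
  have hxd : (0:ℝ) < x ^ d := Real.rpow_pos_of_pos hx d
  -- M * x < (α*b/2) * x^d
  have hsplit : x = x ^ d * x ^ (1-d) := by
    have h1 : d + (1 - d) = 1 := by ring
    rw [← Real.rpow_add hx, h1, Real.rpow_one]
  have h3 : M * x < (α * b / 2) * x ^ d := by
    calc M * x = M * x ^ (1-d) * x ^ d := by (conv_lhs => rw [hsplit]); ring
    _ < M * c * x ^ d := by
        apply mul_lt_mul_of_pos_right _ hxd
        exact mul_lt_mul_of_pos_left hkey hMpos
    _ = (α * b / 2) * x ^ d := by
        rw [hc]; field_simp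
  -- α*b*(1-x)*x^d ≥ (α*b/2)*x^d
  have h4 : (α * b / 2) * x ^ d ≤ α * b * (1 - x) * x ^ d := by
    apply mul_le_mul_of_nonneg_right _ hxd.le
    nlinarith [mul_pos (mul_pos hα hb) (show (0:ℝ) < 1/2 - x by linarith)]
  -- (b-γ)*x - b*x^2 ≥ -M*x
  have h5 : -(M * x) ≤ (b - γ) * x - b * x ^ 2 := by
    have h6 : -|b - γ| ≤ b - γ := neg_abs_le _
    have h7 : x ^ 2 ≤ x := by nlinarith
    nlinarith [mul_le_mul_of_nonneg_right h6 hx.le, mul_le_mul_of_nonneg_left h7 hb.le]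
  linarith
end
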